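/- (Augmented Lagrangian dual: critical points have zero increment, one-dimensional instance.) Fix real parameters q, c, d, e, μ and a penalty parameter ν > 0. Define P^d_ν(τ, σ) = −c²/(2(q + (μ+τ)σ)) − (μ+τ)(½σ² + σd + e) − ½ντ² on the open set where q + (μ+τ)σ ≠ 0, and P^d(μ', σ) = −c²/(2(q + μ'σ)) − μ'(½σ² + σd + e). If (τ̄, σ̄) is a critical point of the function (μ', τ, σ) ↦ −c²/(2(q + (μ'+τ)σ)) − (μ'+τ)(½σ² + σd + e) − ½ντ² at (μ, τ̄, σ̄) (i.e. all three partial derivatives in μ', τ, σ vanish there, with q + (μ+τ̄)σ̄ ≠ 0), then τ̄ = 0 and the augmented dual and the canonical dual agree there: P^d_ν(0, σ̄) = P^d(μ, σ̄). Hence the penalty term is unnecessary: the augmented canonical dual and the canonical dual are equivalent at their stationary points. -/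

import Mathlib

/-!
Since `P^d_ν(μ', τ, σ) = P^d(μ' + τ, σ) − ½ντ²`, the partial derivatives in `μ'` and in `τ`
differ only by the derivative `ντ` of the penalty; both vanish at a critical point, so `ντ = 0`.
-/

/-- The augmented canonical dual function
`P^d_ν(μ', τ, σ) = −c²/(2(q + (μ'+τ)σ)) − (μ'+τ)(½σ² + σd + e) − ½ντ²`. -/
noncomputable def PdAug (q c d e ν : ℝ) (μ' τ σ : ℝ) : ℝ :=
  -(c ^ 2) / (2 * (q + (μ' + τ) * σ)) - (μ' + τ) * (σ ^ 2 / 2 + σ * d + e)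
    - (1/2) * ν * τ ^ 2

/-- The canonical dual function
`P^d(μ, σ) = −c²/(2(q + μσ)) − μ(½σ² + σd + e)`. -/
noncomputable def Pd (q c d e : ℝ) (μ σ : ℝ) : ℝ :=
  -(c ^ 2) / (2 * (q + μ * σ)) - μ * (σ ^ 2 / 2 + σ * d + e)

lemma PdAug_eq_Pd_sub (q c d e ν μ' τ σ : ℝ) :
    PdAug q c d e ν μ' τ σ = Pd q c d e (μ' + τ) σ - 1 / 2 * ν * τ ^ 2 :=
  rfl

lemma differentiableAt_Pd_mu (q c d e μ σ : ℝ) (h : q + μ * σ ≠ 0) :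
    DifferentiableAt ℝ (fun μ => Pd q c d e μ σ) μ := by
  unfold Pd
  fun_prop (disch := exact mul_ne_zero two_ne_zero h)

lemma deriv_sub_deriv_of_add_penalty (f : ℝ → ℝ) (ν μ τ : ℝ)
    (hf : DifferentiableAt ℝ f (μ + τ)) :
    deriv (fun μ' => f (μ' + τ) - 1 / 2 * ν * τ ^ 2) μ
      - deriv (fun τ' => f (μ + τ') - 1 / 2 * ν * τ' ^ 2) τ = ν * τ := by
  have hμ' : HasDerivAt (fun μ' => f (μ' + τ) - 1 / 2 * ν * τ ^ 2) (deriv f (μ + τ)) μ :=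
    (hf.hasDerivAt.comp_add_const μ τ).sub_const _
  have hτ' : HasDerivAt (fun τ' => f (μ + τ') - 1 / 2 * ν * τ' ^ 2)
      (deriv f (μ + τ) - ν * τ) τ := by
    refine ((hf.hasDerivAt.comp_const_add μ τ).sub
      ((hasDerivAt_pow 2 τ).const_mul (1 / 2 * ν))).congr_deriv ?_
    norm_num
    ring
  rw [hμ'.deriv, hτ'.deriv]
  ring

theorem augmented_dual_critical_tau_zero_general
    (q c d e μ ν : ℝ) (hν : 0 < ν) (τb σb : ℝ)
    (hG : q + (μ + τb) * σb ≠ 0)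
    (hμ : deriv (fun μ' => PdAug q c d e ν μ' τb σb) μ = 0)
    (hτ : deriv (fun τ => PdAug q c d e ν μ τ σb) τb = 0) :
    τb = 0 ∧ PdAug q c d e ν μ 0 σb = Pd q c d e μ σb := by
  simp only [PdAug_eq_Pd_sub] at hμ hτ
  have hgap := deriv_sub_deriv_of_add_penalty (fun s => Pd q c d e s σb) ν μ τb
    (differentiableAt_Pd_mu q c d e (μ + τb) σb hG)
  have hτb : τb = 0 := by
    rw [hμ, hτ, sub_zero, eq_comm] at hgap
    exact (mul_eq_zero.mp hgap).resolve_left hν.ne'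
  refine ⟨hτb, ?_⟩
  simp [PdAug_eq_Pd_sub]

/-- Augmented Lagrangian dual: critical points have zero
increment, one-dimensional instance: at any critical point `(μ, τ̄, σ̄)` of
the augmented canonical dual (all three partial derivatives vanish, with
`q + (μ+τ̄)σ̄ ≠ 0` and penalty parameter `ν > 0`), the increment variable
vanishes, `τ̄ = 0`, and the augmented dual agrees with the canonical dual
there. -/
theorem augmented_dual_critical_tau_zero
    (q c d e μ ν : ℝ) (hν : 0 < ν) (τb σb : ℝ)
    (hG : q + (μ + τb) * σb ≠ 0)
    (hμ : deriv (fun μ' => PdAug q c d e ν μ' τb σb) μ = 0)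
    (hτ : deriv (fun τ => PdAug q c d e ν μ τ σb) τb = 0)
    (hσ : deriv (fun σ => PdAug q c d e ν μ τb σ) σb = 0) :
    τb = 0 ∧ PdAug q c d e ν μ 0 σb = Pd q c d e μ σb :=
  augmented_dual_critical_tau_zero_general q c d e μ ν hν τb σb hG hμ hτ
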